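/- arXiv:2112.10839 — 2 statements merged into one kernel-verified Lean document; each statement's English description precedes it below -/
import Mathlib

section
/- For A ∈ GL₂(ℝ) and ω ∈ ℝ² \ {0}, writing A·γ(ω) = M·C with M ∈ K₀ and C ∈ H₍₁,₀₎ (the unique such factorization), one has M = γ(ω·A⁻¹) and C = γ(ω·A⁻¹)⁻¹·A·γ(ω). -/
/-- The section γ : ℝ² \ {0} → K₀, γ(ω) = ‖ω‖⁻² [[ω₁,-ω₂],[ω₂,ω₁]]. -/
noncomputable def gammaM (ω : Fin 2 → ℝ) : Matrix (Fin 2) (Fin 2) ℝ :=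
  ((ω 0 ^ 2 + ω 1 ^ 2)⁻¹ : ℝ) • !![ω 0, -ω 1; ω 1, ω 0]

/-- K₀ as a set of matrices. -/
def K0set : Set (Matrix (Fin 2) (Fin 2) ℝ) :=
  {M | ∃ s t : ℝ, s ^ 2 + t ^ 2 > 0 ∧ M = !![s, -t; t, s]}

/-- H₍₁,₀₎ as a set of matrices. -/
def Hset : Set (Matrix (Fin 2) (Fin 2) ℝ) :=
  {C | ∃ u v : ℝ, v ≠ 0 ∧ C = !![1, 0; u, v]}

lemma sq_pos_of_ne (ω : Fin 2 → ℝ) (hω : ω ≠ 0) : 0 < ω 0 ^ 2 + ω 1 ^ 2 := by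
  obtain ⟨i, hi⟩ := Function.ne_iff.mp hω
  fin_cases i <;> simp only [Pi.zero_apply] at hi <;> positivity

lemma gammaM_left_inv (ω : Fin 2 → ℝ) (hω : ω ≠ 0) :
    !![ω 0, ω 1; -ω 1, ω 0] * gammaM ω = 1 := by
  have hd := (sq_pos_of_ne ω hω).ne'
  have hd' : ω 1 ^ 2 + ω 0 ^ 2 ≠ 0 := by rw [add_comm]; exact hd
  ext i j
  fin_cases i <;> fin_cases j <;>
    simp [gammaM, Matrix.mul_apply, Fin.sum_univ_two] <;>
    first | ring1 | (field_simp; done) | (field_simp; ring1)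

lemma gammaM_inv (ω : Fin 2 → ℝ) (hω : ω ≠ 0) :
    (gammaM ω)⁻¹ = !![ω 0, ω 1; -ω 1, ω 0] :=
  Matrix.inv_eq_left_inv (gammaM_left_inv ω hω)

lemma vecMul_gammaM (ω : Fin 2 → ℝ) (hω : ω ≠ 0) :
    Matrix.vecMul ω (gammaM ω) = ![1, 0] := by
  have hd := (sq_pos_of_ne ω hω).ne'
  have hd' : ω 1 ^ 2 + ω 0 ^ 2 ≠ 0 := by rw [add_comm]; exact hd
  funext j
  fin_cases j <;>
    simp [gammaM, Matrix.vecMul, dotProduct, Fin.sum_univ_two] <;>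
    first | ring1 | (field_simp; done) | (field_simp; ring1)

lemma gammaM_det (ω : Fin 2 → ℝ) (hω : ω ≠ 0) :
    (gammaM ω).det = (ω 0 ^ 2 + ω 1 ^ 2)⁻¹ := by
  have hd := (sq_pos_of_ne ω hω).ne'
  rw [gammaM, Matrix.det_smul, Matrix.det_fin_two_of]
  have h2 : ω 0 * ω 0 - -ω 1 * ω 1 = ω 0 ^ 2 + ω 1 ^ 2 := by ring
  rw [h2]
  simp only [Fintype.card_fin]
  rw [sq, mul_assoc, inv_mul_cancel₀ hd, mul_one]

lemma gammaM_eq (ω : Fin 2 → ℝ) :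
    gammaM ω = !![(ω 0 ^ 2 + ω 1 ^ 2)⁻¹ * ω 0, -((ω 0 ^ 2 + ω 1 ^ 2)⁻¹ * ω 1);
      (ω 0 ^ 2 + ω 1 ^ 2)⁻¹ * ω 1, (ω 0 ^ 2 + ω 1 ^ 2)⁻¹ * ω 0] := by
  ext i j
  fin_cases i <;> fin_cases j <;> simp [gammaM] <;> try ring

lemma vec_eta (v : Fin 2 → ℝ) : ![v 0, v 1] = v := by
  funext i; fin_cases i <;> simp

/-- in the unique factorization A·γ(ω) = M·C (M ∈ K₀, C ∈ H₍₁,₀₎)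
one has M = γ(ω·A⁻¹) and C = γ(ω·A⁻¹)⁻¹·A·γ(ω). -/
theorem stmt_7 (A : Matrix (Fin 2) (Fin 2) ℝ) (hA : A.det ≠ 0)
    (ω : Fin 2 → ℝ) (hω : ω ≠ 0) :
    gammaM (Matrix.vecMul ω A⁻¹) ∈ K0set ∧
    (gammaM (Matrix.vecMul ω A⁻¹))⁻¹ * A * gammaM ω ∈ Hset ∧
    A * gammaM ω =
      gammaM (Matrix.vecMul ω A⁻¹) *
        ((gammaM (Matrix.vecMul ω A⁻¹))⁻¹ * A * gammaM ω) ∧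
    ∀ M C : Matrix (Fin 2) (Fin 2) ℝ, M ∈ K0set → C ∈ Hset →
      A * gammaM ω = M * C →
      M = gammaM (Matrix.vecMul ω A⁻¹) ∧
      C = (gammaM (Matrix.vecMul ω A⁻¹))⁻¹ * A * gammaM ω := by
  set ω' := Matrix.vecMul ω A⁻¹ with hω'def
  have hAinv : A⁻¹ * A = 1 := Matrix.nonsing_inv_mul A hA.isUnit
  have hωA : Matrix.vecMul ω' A = ω := by
    rw [hω'def, Matrix.vecMul_vecMul, hAinv, Matrix.vecMul_one]
  have hω' : ω' ≠ 0 := by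
    intro h
    apply hω
    rw [← hωA, h, Matrix.zero_vecMul]
  have hdpos := sq_pos_of_ne ω' hω'
  have hd' : ω' 0 ^ 2 + ω' 1 ^ 2 ≠ 0 := hdpos.ne'
  set G : Matrix (Fin 2) (Fin 2) ℝ := gammaM ω' with hGdef
  have hGdet : G.det ≠ 0 := by
    rw [hGdef, gammaM_det ω' hω']
    exact inv_ne_zero hd'
  have hGinv : G⁻¹ = !![ω' 0, ω' 1; -ω' 1, ω' 0] := gammaM_inv ω' hω'
  -- K0 membership
  have hK : gammaM ω' ∈ K0set := by
    refine ⟨(ω' 0 ^ 2 + ω' 1 ^ 2)⁻¹ * ω' 0, (ω' 0 ^ 2 + ω' 1 ^ 2)⁻¹ * ω' 1, ?_, gammaM_eq ω'⟩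
    have key : ((ω' 0 ^ 2 + ω' 1 ^ 2)⁻¹ * ω' 0) ^ 2 + ((ω' 0 ^ 2 + ω' 1 ^ 2)⁻¹ * ω' 1) ^ 2
        = (ω' 0 ^ 2 + ω' 1 ^ 2)⁻¹ := by
      field_simp
    rw [key]
    exact inv_pos.mpr hdpos
  -- the candidate C
  set C : Matrix (Fin 2) (Fin 2) ℝ := G⁻¹ * A * gammaM ω with hCdef
  -- first row of C is (1,0)
  have hrow : Matrix.vecMul ![1, 0] C = ![1, 0] := by
    have h1 : Matrix.vecMul ![1, 0] G⁻¹ = ω' := by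
      rw [hGinv]
      funext j
      fin_cases j <;> simp [Matrix.vecMul, dotProduct, Fin.sum_univ_two]
    rw [hCdef, mul_assoc, ← Matrix.vecMul_vecMul, h1, ← Matrix.vecMul_vecMul, hωA,
      vecMul_gammaM ω hω]
  have hC00 : C 0 0 = 1 := by
    have := congrFun hrow 0
    simpa [Matrix.vecMul, dotProduct, Fin.sum_univ_two] using this
  have hC01 : C 0 1 = 0 := by
    have := congrFun hrow 1
    simpa [Matrix.vecMul, dotProduct, Fin.sum_univ_two] using this
  have hCdet : C.det ≠ 0 := by
    rw [hCdef, Matrix.det_mul, Matrix.det_mul]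
    have h1 : (G⁻¹).det ≠ 0 := by
      rw [hGinv, Matrix.det_fin_two_of]
      intro h
      apply hd'
      linear_combination h
    have h2 : (gammaM ω).det ≠ 0 := by
      rw [gammaM_det ω hω]
      exact inv_ne_zero (sq_pos_of_ne ω hω).ne'
    exact mul_ne_zero (mul_ne_zero h1 hA) h2
  have hC11 : C 1 1 ≠ 0 := by
    intro h
    apply hCdet
    rw [Matrix.det_fin_two, hC00, hC01, h]
    ring
  have hCform : C = !![1, 0; C 1 0, C 1 1] := by
    ext i j
    fin_cases i <;> fin_cases j <;> simp [hC00, hC01]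
  have hH : C ∈ Hset := ⟨C 1 0, C 1 1, hC11, hCform⟩
  have hfac0 : A * gammaM ω = G * C := by
    rw [hCdef, ← mul_assoc, ← mul_assoc, Matrix.mul_nonsing_inv G hGdet.isUnit, one_mul]
  refine ⟨hK, hH, hfac0, ?_⟩
  rintro M C' ⟨s, t, hst, rfl⟩ ⟨u, v, hv, rfl⟩ hfac
  have hCdet' : (!![1, 0; u, v] : Matrix (Fin 2) (Fin 2) ℝ).det ≠ 0 := by
    rw [Matrix.det_fin_two_of]; simpa using hv
  -- row computation: ω' · M = (1,0)
  have key : Matrix.vecMul (Matrix.vecMul ω' !![s, -t; t, s]) !![1, 0; u, v]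
      = Matrix.vecMul ![1, 0] !![1, 0; u, v] := by
    rw [Matrix.vecMul_vecMul, ← hfac, ← Matrix.vecMul_vecMul, hωA, vecMul_gammaM ω hω]
    funext j
    fin_cases j <;> simp [Matrix.vecMul, dotProduct, Fin.sum_univ_two]
  have key2 : Matrix.vecMul ω' !![s, -t; t, s] = ![1, 0] := by
    have e : ∀ x : Fin 2 → ℝ,
        Matrix.vecMul (Matrix.vecMul x !![1, 0; u, v]) (!![1, 0; u, v])⁻¹ = x := by
      intro x
      rw [Matrix.vecMul_vecMul, Matrix.mul_nonsing_inv _ hCdet'.isUnit, Matrix.vecMul_one]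
    have h := congrArg (fun x => Matrix.vecMul x (!![1, 0; u, v])⁻¹) key
    simpa only [e] using h
  have eq1 : ω' 0 * s + ω' 1 * t = 1 := by
    have := congrFun key2 0
    simpa [Matrix.vecMul, dotProduct, Fin.sum_univ_two] using this
  have eq2 : ω' 0 * -t + ω' 1 * s = 0 := by
    have := congrFun key2 1
    simpa [Matrix.vecMul, dotProduct, Fin.sum_univ_two] using this
  have hs : (ω' 0 ^ 2 + ω' 1 ^ 2) * s = ω' 0 := by
    linear_combination ω' 0 * eq1 + ω' 1 * eq2
  have ht : (ω' 0 ^ 2 + ω' 1 ^ 2) * t = ω' 1 := by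
    linear_combination ω' 1 * eq1 - ω' 0 * eq2
  have hsval : s = (ω' 0 ^ 2 + ω' 1 ^ 2)⁻¹ * ω' 0 := by
    field_simp
    linear_combination hs
  have htval : t = (ω' 0 ^ 2 + ω' 1 ^ 2)⁻¹ * ω' 1 := by
    field_simp
    linear_combination ht
  have hM : !![s, -t; t, s] = gammaM ω' := by
    rw [gammaM_eq ω', hsval, htval]
  constructor
  · exact hM
  · rw [hCdef, mul_assoc, hfac, hM, ← hGdef, ← mul_assoc,
      Matrix.nonsing_inv_mul G hGdet.isUnit, one_mul]
end

section
/- For A ∈ GL₂(ℝ) and ω ∈ ℝ² \ {0}, the matrix γ(ω)⁻¹·A·γ(ω·A) lies in H₍₁,₀₎, i.e., it has the form [[1,0],[u_{ω,A}, v_{ω,A}]] for some real u_{ω,A} and nonzero real v_{ω,A}. -/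
lemma sq_add_sq_ne (ω : Fin 2 → ℝ) (hω : ω ≠ 0) : ω 0 ^ 2 + ω 1 ^ 2 ≠ 0 := by
  intro h
  have h0 : ω 0 = 0 ∧ ω 1 = 0 := by
    constructor <;> nlinarith [sq_nonneg (ω 0), sq_nonneg (ω 1)]
  apply hω
  funext i
  fin_cases i <;> simp [h0.1, h0.2]

/-- γ(ω)⁻¹·A·γ(ω·A) lies in H₍₁,₀₎, i.e. it equals
[[1,0],[u,v]] for some u and some nonzero v. -/
theorem stmt_8 (A : Matrix (Fin 2) (Fin 2) ℝ) (hA : A.det ≠ 0)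
    (ω : Fin 2 → ℝ) (hω : ω ≠ 0) :
    ∃ u v : ℝ, v ≠ 0 ∧
      (gammaM ω)⁻¹ * A * gammaM (Matrix.vecMul ω A) = !![1, 0; u, v] := by
  have hdet : A.det = A 0 0 * A 1 1 - A 0 1 * A 1 0 := Matrix.det_fin_two A
  have hab : ω 0 ^ 2 + ω 1 ^ 2 ≠ 0 := sq_add_sq_ne ω hω
  have hωA : Matrix.vecMul ω A ≠ 0 := by
    intro h
    apply hω
    have hinv : A * A⁻¹ = 1 := Matrix.mul_nonsing_inv A (isUnit_iff_ne_zero.mpr hA)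
    have := congrArg (fun v => Matrix.vecMul v A⁻¹) h
    simp only [Matrix.vecMul_vecMul, hinv, Matrix.vecMul_one, Matrix.zero_vecMul] at this
    exact this
  have hv : Matrix.vecMul ω A =
      ![ω 0 * A 0 0 + ω 1 * A 1 0, ω 0 * A 0 1 + ω 1 * A 1 1] := by
    funext i
    fin_cases i <;>
      simp [Matrix.vecMul, dotProduct, Fin.sum_univ_two]
  have hn : (ω 0 * A 0 0 + ω 1 * A 1 0) ^ 2 + (ω 0 * A 0 1 + ω 1 * A 1 1) ^ 2 ≠ 0 := by
    have := sq_add_sq_ne _ hωA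
    rw [hv] at this
    simpa using this
  refine ⟨((-(ω 1) * A 0 0 + ω 0 * A 1 0) * (ω 0 * A 0 0 + ω 1 * A 1 0) +
        (-(ω 1) * A 0 1 + ω 0 * A 1 1) * (ω 0 * A 0 1 + ω 1 * A 1 1)) /
        ((ω 0 * A 0 0 + ω 1 * A 1 0) ^ 2 + (ω 0 * A 0 1 + ω 1 * A 1 1) ^ 2),
      (ω 0 ^ 2 + ω 1 ^ 2) * (A 0 0 * A 1 1 - A 0 1 * A 1 0) /
        ((ω 0 * A 0 0 + ω 1 * A 1 0) ^ 2 + (ω 0 * A 0 1 + ω 1 * A 1 1) ^ 2), ?_, ?_⟩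
  · rw [← hdet]
    exact div_ne_zero (mul_ne_zero hab hA) hn
  · rw [gammaM_inv ω hω, hv]
    ext i j
    fin_cases i <;> fin_cases j <;>
      simp [gammaM, Matrix.mul_apply, Matrix.vecMul, dotProduct, Fin.sum_univ_two] <;>
      field_simp <;> ring
end
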